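/- arXiv:2206.10615 — 2 statements merged into one kernel-verified Lean document; each statement's English description precedes it below -/
import Mathlib

section
/- For every a ≥ 0, every ε > 0, and every q > 1, one has (1+a)^q ≤ (1+ε) a^q + (1 - (1+ε)^{-1/(q-1)})^{1-q}. -/
/-!
Write `1 + a = δ · (a / δ) + (1 - δ) · (1 / (1 - δ))` with `δ = (1 + ε) ^ (-1 / (q - 1)) ∈ (0, 1)`
and apply convexity of `x ↦ x ^ q`: the two weighted terms become `δ ^ (1 - q) a ^ q = (1 + ε) a ^ q`
and `(1 - δ) ^ (1 - q)`.
-/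

open Real

namespace Real

lemma mul_div_rpow_eq_rpow_one_sub_mul {t x : ℝ} (ht : 0 < t) (hx : 0 ≤ x) (p : ℝ) :
    t * (x / t) ^ p = t ^ (1 - p) * x ^ p := by
  rw [div_rpow hx ht.le, rpow_sub ht, rpow_one]
  field_simp

lemma add_rpow_le_weighted_rpow_add_rpow {x y t p : ℝ} (hx : 0 ≤ x) (hy : 0 ≤ y)
    (ht₀ : 0 < t) (ht₁ : t < 1) (hp : 1 ≤ p) :
    (x + y) ^ p ≤ t ^ (1 - p) * x ^ p + (1 - t) ^ (1 - p) * y ^ p := by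
  have ht₁' : 0 < 1 - t := sub_pos.2 ht₁
  have hconv := (convexOn_rpow hp).2 (Set.mem_Ici.2 (div_nonneg hx ht₀.le))
    (Set.mem_Ici.2 (div_nonneg hy ht₁'.le)) ht₀.le ht₁'.le (add_sub_cancel t 1)
  simp only [smul_eq_mul] at hconv
  rwa [mul_div_cancel₀ x ht₀.ne', mul_div_cancel₀ y ht₁'.ne',
    mul_div_rpow_eq_rpow_one_sub_mul ht₀ hx, mul_div_rpow_eq_rpow_one_sub_mul ht₁' hy] at hconv

end Real

theorem one_add_pow_le (a ε q : ℝ) (ha : 0 ≤ a) (hε : 0 < ε) (hq : 1 < q) :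
    (1 + a) ^ q ≤ (1 + ε) * a ^ q + (1 - (1 + ε) ^ (-(1/(q-1)))) ^ (1 - q) := by
  set δ := (1 + ε) ^ (-(1/(q-1)))
  have hε₁ : 1 < 1 + ε := lt_add_of_pos_right 1 hε
  have hq₁ : 0 < q - 1 := sub_pos.2 hq
  have hδ₀ : 0 < δ := rpow_pos_of_pos (by linarith) _
  have hδ₁ : δ < 1 := rpow_lt_one_of_one_lt_of_neg hε₁ (neg_neg_of_pos (by positivity))
  have hδ_pow : δ ^ (1 - q) = 1 + ε := by
    rw [← rpow_mul (by linarith)]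
    convert rpow_one (1 + ε) using 2
    field_simp
    ring
  have key := add_rpow_le_weighted_rpow_add_rpow ha zero_le_one hδ₀ hδ₁ hq.le
  rwa [add_comm a, hδ_pow, one_rpow, mul_one] at key
end

section
/- For all vectors x, y in ℝ^N with N ≥ 2, one has ⟨|x|^{N-2} x − |y|^{N-2} y, x − y⟩ ≥ 2^{2−N} |x − y|^N, where ⟨·,·⟩ is the Euclidean inner product and |·| the Euclidean norm. -/
/-! With `a = ‖x‖`, `b = ‖y‖` and `p = N - 2`, polarisation gives
`⟪a^p x - b^p y, x - y⟫ = (a^p + b^p)/2 · ‖x - y‖² + (a^p - b^p)(a² - b²)/2`.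
The second term is nonnegative since both factors have the sign of `a - b`, and by the triangle
inequality and convexity of `t ↦ t^p`, `(‖x - y‖/2)^p ≤ ((a + b)/2)^p ≤ (a^p + b^p)/2`. -/

lemma add_div_two_pow_le {a b : ℝ} (ha : 0 ≤ a) (hb : 0 ≤ b) (n : ℕ) :
    ((a + b) / 2) ^ n ≤ (a ^ n + b ^ n) / 2 := by
  rw [add_div, add_div, div_eq_inv_mul a, div_eq_inv_mul b, div_eq_inv_mul (a ^ n),
    div_eq_inv_mul (b ^ n)]
  exact (convexOn_pow n).2 (Set.mem_Ici.2 ha) (Set.mem_Ici.2 hb) (by norm_num) (by norm_num)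
    (by norm_num)

lemma pow_sub_pow_mul_pow_sub_pow_nonneg {a b : ℝ} (ha : 0 ≤ a) (hb : 0 ≤ b) (m n : ℕ) :
    0 ≤ (a ^ m - b ^ m) * (a ^ n - b ^ n) := by
  rcases le_total a b with hab | hba
  · exact mul_nonneg_of_nonpos_of_nonpos (sub_nonpos.2 (pow_le_pow_left₀ ha hab m))
      (sub_nonpos.2 (pow_le_pow_left₀ ha hab n))
  · exact mul_nonneg (sub_nonneg.2 (pow_le_pow_left₀ hb hba m))
      (sub_nonneg.2 (pow_le_pow_left₀ hb hba n))

lemma half_norm_sub_pow_le {E : Type*} [SeminormedAddCommGroup E] (n : ℕ) (x y : E) :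
    (‖x - y‖ / 2) ^ n ≤ (‖x‖ ^ n + ‖y‖ ^ n) / 2 :=
  calc (‖x - y‖ / 2) ^ n ≤ ((‖x‖ + ‖y‖) / 2) ^ n := by gcongr; exact norm_sub_le x y
    _ ≤ (‖x‖ ^ n + ‖y‖ ^ n) / 2 := add_div_two_pow_le (norm_nonneg x) (norm_nonneg y) n

section InnerProductSpace

variable {E : Type*} [NormedAddCommGroup E] [InnerProductSpace ℝ E]

lemma inner_norm_pow_smul_sub_eq (n : ℕ) (x y : E) :
    inner ℝ (‖x‖ ^ n • x - ‖y‖ ^ n • y) (x - y) =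
      (‖x‖ ^ n + ‖y‖ ^ n) / 2 * ‖x - y‖ ^ 2 + (‖x‖ ^ n - ‖y‖ ^ n) * (‖x‖ ^ 2 - ‖y‖ ^ 2) / 2 := by
  simp only [inner_sub_left, inner_sub_right, real_inner_smul_left, real_inner_self_eq_norm_sq,
    norm_sub_sq_real, real_inner_comm x y]
  ring

theorem half_norm_sub_pow_mul_sq_le_inner (n : ℕ) (x y : E) :
    (‖x - y‖ / 2) ^ n * ‖x - y‖ ^ 2 ≤ inner ℝ (‖x‖ ^ n • x - ‖y‖ ^ n • y) (x - y) := by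
  rw [inner_norm_pow_smul_sub_eq]
  have := pow_sub_pow_mul_pow_sub_pow_nonneg (norm_nonneg x) (norm_nonneg y) n 2
  have := mul_le_mul_of_nonneg_right (half_norm_sub_pow_le n x y) (sq_nonneg ‖x - y‖)
  linarith

end InnerProductSpace

open Real

theorem nLaplacian_monotonicity (N : ℕ) (hN : 2 ≤ N) (x y : EuclideanSpace ℝ (Fin N)) :
    (2:ℝ) ^ ((2:ℤ) - (N:ℤ)) * ‖x - y‖ ^ N ≤
      inner (𝕜 := ℝ) (‖x‖ ^ (N - 2) • x - ‖y‖ ^ (N - 2) • y) (x - y) := by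
  obtain ⟨n, rfl⟩ : ∃ n, N = n + 2 := ⟨N - 2, by omega⟩
  have hscale : (2:ℝ) ^ ((2:ℤ) - ((n + 2 : ℕ) : ℤ)) * ‖x - y‖ ^ (n + 2) =
      (‖x - y‖ / 2) ^ n * ‖x - y‖ ^ 2 := by
    rw [show (2:ℤ) - ((n + 2 : ℕ) : ℤ) = -(n : ℤ) by push_cast; ring, zpow_neg, zpow_natCast,
      div_pow, pow_add]
    ring
  rw [hscale, Nat.add_sub_cancel]
  exact half_norm_sub_pow_mul_sq_le_inner n x y
end
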